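/- arXiv:2010.00785 — 2 statements merged into one kernel-verified Lean document; each statement's English description precedes it below -/
import Mathlib

section
/- Let Ω ⊆ ℂ be a domain, ζ₀ ∈ Ω, and let U be a real-valued harmonic function on Ω such that |U|^2 admits a harmonic majorant on Ω. Suppose V is a real-valued harmonic function on Ω with V(ζ₀) = 0 such that F = U + iV is analytic on Ω. Then |F|^2 admits a harmonic majorant on Ω, and if H_U and H_F denote the least harmonic majorants of |U|^2 and |F|^2 respectively, then H_F(ζ₀) ≤ 2 H_U(ζ₀); equivalently, ‖F‖_{2,ζ₀} ≤ √2 · ‖U‖_{2,ζ₀}. -/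
/-!
Since `F` is analytic, `Re (F²) = U² - V²` is harmonic, and `|F|² = U² + V² = 2U² - Re (F²)`.
Hence `2 H_U - Re (F²)` is a harmonic majorant of `|F|²`; at `ζ₀` we have `F(ζ₀) = U(ζ₀)` real,
so its value there is `2 H_U(ζ₀) - U(ζ₀)² ≤ 2 H_U(ζ₀)`.
-/

open Complex Metric Set Filter

/-- A real-valued function is harmonic on an open set `s ⊆ ℂ` if it is locally
the real part of a holomorphic function. -/
def HarmonicOn (u : ℂ → ℝ) (s : Set ℂ) : Prop :=
  ∀ z ∈ s, ∃ ε > 0, ball z ε ⊆ s ∧ ∃ F : ℂ → ℂ,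
    DifferentiableOn ℂ F (ball z ε) ∧ ∀ w ∈ ball z ε, (F w).re = u w

/-- A complex-valued function is harmonic if its real and imaginary parts are. -/
def HarmonicOnC (u : ℂ → ℂ) (s : Set ℂ) : Prop :=
  HarmonicOn (fun z => (u z).re) s ∧ HarmonicOn (fun z => (u z).im) s

/-- `H` is a harmonic majorant of `g` on `s`. -/
def HarmonicMajorantOn (g H : ℂ → ℝ) (s : Set ℂ) : Prop :=
  HarmonicOn H s ∧ ∀ z ∈ s, g z ≤ H z

/-- `H` is the least harmonic majorant of `g` on `s`. -/
def IsLeastHarmonicMajorantOn (g H : ℂ → ℝ) (s : Set ℂ) : Prop :=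
  HarmonicMajorantOn g H s ∧ ∀ H', HarmonicMajorantOn g H' s → ∀ z ∈ s, H z ≤ H' z

theorem HarmonicOn.const_mul_sub_re {u : ℂ → ℝ} {s : Set ℂ} (hu : HarmonicOn u s) (c : ℝ)
    {G : ℂ → ℂ} (hG : DifferentiableOn ℂ G s) :
    HarmonicOn (fun z => c * u z - (G z).re) s := by
  intro z hz
  obtain ⟨ε, hε, hball, F, hF, hFre⟩ := hu z hz
  refine ⟨ε, hε, hball, fun w => c * F w - G w, (hF.const_mul _).sub (hG.mono hball), ?_⟩
  intro w hw
  simp [hFre w hw]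

theorem Complex.sq_norm_eq_two_mul_sq_re_sub_re_sq (z : ℂ) : ‖z‖ ^ 2 = 2 * z.re ^ 2 - (z ^ 2).re := by
  rw [Complex.sq_norm, Complex.normSq_apply, sq z, Complex.mul_re]
  ring

theorem HarmonicMajorantOn.two_mul_sub_re_sq {G : ℂ → ℂ} {H : ℂ → ℝ} {s : Set ℂ}
    (hH : HarmonicMajorantOn (fun z => (G z).re ^ 2) H s) (hG : DifferentiableOn ℂ G s) :
    HarmonicMajorantOn (fun z => ‖G z‖ ^ 2) (fun z => 2 * H z - (G z ^ 2).re) s := by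
  refine ⟨hH.1.const_mul_sub_re 2 (hG.pow 2), fun z hz => ?_⟩
  have hHz : (G z).re ^ 2 ≤ H z := hH.2 z hz
  show ‖G z‖ ^ 2 ≤ 2 * H z - (G z ^ 2).re
  rw [Complex.sq_norm_eq_two_mul_sq_re_sub_re_sq]
  linarith

theorem riesz_lumer_general (Ω : Set ℂ)
    (ζ₀ : ℂ) (hζ₀ : ζ₀ ∈ Ω)
    (U V : ℂ → ℝ) (hV0 : V ζ₀ = 0)
    (HU : ℂ → ℝ) (hHU : IsLeastHarmonicMajorantOn (fun ζ => ‖(U ζ : ℂ)‖ ^ 2) HU Ω)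
    (F : ℂ → ℂ) (hFdef : ∀ ζ ∈ Ω, F ζ = (U ζ : ℂ) + (V ζ : ℂ) * Complex.I)
    (hF : DifferentiableOn ℂ F Ω) :
    (∃ H, HarmonicMajorantOn (fun ζ => ‖F ζ‖ ^ 2) H Ω) ∧
    ∀ HF, IsLeastHarmonicMajorantOn (fun ζ => ‖F ζ‖ ^ 2) HF Ω →
      HF ζ₀ ≤ 2 * HU ζ₀ ∧
      Real.sqrt (HF ζ₀) ≤ Real.sqrt 2 * Real.sqrt (HU ζ₀) := by
  have hHU_re : HarmonicMajorantOn (fun ζ => (F ζ).re ^ 2) HU Ω :=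
    ⟨hHU.1.1, fun ζ hζ => by simpa [hFdef ζ hζ] using hHU.1.2 ζ hζ⟩
  have hmaj := hHU_re.two_mul_sub_re_sq hF
  refine ⟨⟨_, hmaj⟩, fun HF hHF => ?_⟩
  have hF0 : F ζ₀ = U ζ₀ := by simp [hFdef ζ₀ hζ₀, hV0]
  have hle : HF ζ₀ ≤ 2 * HU ζ₀ - U ζ₀ ^ 2 := by
    simpa [hF0, ← Complex.ofReal_pow] using hHF.2 _ hmaj ζ₀ hζ₀
  have hHF_le : HF ζ₀ ≤ 2 * HU ζ₀ := by linarith [sq_nonneg (U ζ₀)]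
  refine ⟨hHF_le, ?_⟩
  calc Real.sqrt (HF ζ₀) ≤ Real.sqrt (2 * HU ζ₀) := Real.sqrt_le_sqrt hHF_le
    _ = Real.sqrt 2 * Real.sqrt (HU ζ₀) := Real.sqrt_mul zero_le_two _

/-- Riesz's theorem for the Lumer Hardy space `(Lh)²(Ω)`. -/
theorem riesz_lumer (Ω : Set ℂ) (hΩo : IsOpen Ω) (hΩc : IsConnected Ω)
    (ζ₀ : ℂ) (hζ₀ : ζ₀ ∈ Ω)
    (U V : ℂ → ℝ) (hU : HarmonicOn U Ω) (hV : HarmonicOn V Ω) (hV0 : V ζ₀ = 0)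
    (HU : ℂ → ℝ) (hHU : IsLeastHarmonicMajorantOn (fun ζ => ‖(U ζ : ℂ)‖ ^ 2) HU Ω)
    (F : ℂ → ℂ) (hFdef : ∀ ζ ∈ Ω, F ζ = (U ζ : ℂ) + (V ζ : ℂ) * Complex.I)
    (hF : DifferentiableOn ℂ F Ω) :
    (∃ H, HarmonicMajorantOn (fun ζ => ‖F ζ‖ ^ 2) H Ω) ∧
    ∀ HF, IsLeastHarmonicMajorantOn (fun ζ => ‖F ζ‖ ^ 2) HF Ω →
      HF ζ₀ ≤ 2 * HU ζ₀ ∧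
      Real.sqrt (HF ζ₀) ≤ Real.sqrt 2 * Real.sqrt (HU ζ₀) :=
  riesz_lumer_general Ω ζ₀ hζ₀ U V hV0 HU hHU F hFdef hF
end

section
/- Let F = U + iV be analytic on a domain Ω ⊆ ℂ with U real-valued, and let H_F be the least harmonic majorant of |F|^2 on Ω. If H_U is the least harmonic majorant of |U|^2, then for every ζ ∈ Ω, H_F(ζ) ≤ 2 H_U(ζ) - Re(F(ζ)^2). -/
open Complex Metric Set Filter

theorem HarmonicOn.isOpen {u : ℂ → ℝ} {s : Set ℂ} (hu : HarmonicOn u s) : IsOpen s :=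
  Metric.isOpen_iff.2 fun z hz => by
    obtain ⟨ε, hε, hball, -⟩ := hu z hz
    exact ⟨ε, hε, hball⟩

theorem DifferentiableOn.harmonicOn_re {G : ℂ → ℂ} {s : Set ℂ} (hs : IsOpen s)
    (hG : DifferentiableOn ℂ G s) : HarmonicOn (fun z => (G z).re) s := fun z hz => by
  obtain ⟨ε, hε, hball⟩ := Metric.isOpen_iff.1 hs z hz
  exact ⟨ε, hε, hball, G, hG.mono hball, fun _ _ => rfl⟩

theorem HarmonicOn.const_mul {u : ℂ → ℝ} {s : Set ℂ} (hu : HarmonicOn u s) (c : ℝ) :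
    HarmonicOn (fun z => c * u z) s := fun z hz => by
  obtain ⟨ε, hε, hball, G, hG, hGre⟩ := hu z hz
  refine ⟨ε, hε, hball, fun w => c * G w, hG.const_mul _, fun w hw => ?_⟩
  simp [hGre w hw]

theorem HarmonicOn.sub {u v : ℂ → ℝ} {s : Set ℂ} (hu : HarmonicOn u s) (hv : HarmonicOn v s) :
    HarmonicOn (fun z => u z - v z) s := fun z hz => by
  obtain ⟨ε, hε, -, G, hG, hGre⟩ := hu z hz
  obtain ⟨δ, hδ, hball, K, hK, hKre⟩ := hv z hz
  have hεδ : ball z (min ε δ) ⊆ ball z ε := ball_subset_ball (min_le_left _ _)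
  have hδε : ball z (min ε δ) ⊆ ball z δ := ball_subset_ball (min_le_right _ _)
  refine ⟨min ε δ, lt_min hε hδ, hδε.trans hball, fun w => G w - K w,
    (hG.mono hεδ).sub (hK.mono hδε), fun w hw => ?_⟩
  simp [hGre w (hεδ hw), hKre w (hδε hw)]

theorem least_majorant_bound_general (Ω : Set ℂ)
    (F : ℂ → ℂ) (hF : DifferentiableOn ℂ F Ω)
    (HU : ℂ → ℝ) (hHU : IsLeastHarmonicMajorantOn (fun ζ => ‖((F ζ).re : ℂ)‖ ^ 2) HU Ω)
    (HF : ℂ → ℝ) (hHF : IsLeastHarmonicMajorantOn (fun ζ => ‖F ζ‖ ^ 2) HF Ω) :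
    ∀ ζ ∈ Ω, HF ζ ≤ 2 * HU ζ - ((F ζ) ^ 2).re := by
  obtain ⟨⟨hHU_harm, hHU_le⟩, -⟩ := hHU
  have hF_sq : HarmonicOn (fun ζ => (F ζ ^ 2).re) Ω :=
    (hF.pow 2).harmonicOn_re hHU_harm.isOpen
  refine hHF.2 _ ⟨(hHU_harm.const_mul 2).sub hF_sq, fun ζ hζ => ?_⟩
  have hre : (F ζ).re ^ 2 ≤ HU ζ := by simpa using hHU_le ζ hζ
  have hnorm := Complex.sq_norm_eq_two_mul_sq_re_sub_re_sq (F ζ)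
  dsimp only
  linarith

/-- Pointwise bound for the least harmonic majorant of `|F|²` in terms of that of `|Re F|²`. -/
theorem least_majorant_bound (Ω : Set ℂ) (hΩo : IsOpen Ω) (hΩc : IsConnected Ω)
    (F : ℂ → ℂ) (hF : DifferentiableOn ℂ F Ω)
    (HU : ℂ → ℝ) (hHU : IsLeastHarmonicMajorantOn (fun ζ => ‖((F ζ).re : ℂ)‖ ^ 2) HU Ω)
    (HF : ℂ → ℝ) (hHF : IsLeastHarmonicMajorantOn (fun ζ => ‖F ζ‖ ^ 2) HF Ω) :
    ∀ ζ ∈ Ω, HF ζ ≤ 2 * HU ζ - ((F ζ) ^ 2).re :=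
  least_majorant_bound_general Ω F hF HU hHU HF hHF
end
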